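/- Under the Setup, write a = ⟨z₄, v₁⟩, b = ⟨z₄, v₂⟩, c = ⟨z₄, v₃⟩ and −3d = ⟨z₄, v₄⟩. Then a, b, c, d are all nonzero and (1/a) v₁ + (1/b) v₂ + (1/c) v₃ + (1/d) v₄ = 0. -/
import Mathlib


open MeasureTheory Real
open scoped RealInnerProductSpace

noncomputable section

abbrev E3 := EuclideanSpace ℝ (Fin 3)

/-- The surface (area) measure `σ` on the unit sphere `S² ⊆ ℝ³`, normalized so that
`σ(S²) = 4π`. -/
def sphereArea : Measure (Metric.sphere (0 : E3) 1) := (volume : Measure E3).toSphere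

/-- The cross product on `ℝ³`. -/
def cross3 (a b : E3) : E3 :=
  (WithLp.equiv 2 (Fin 3 → ℝ)).symm
    ![a 1 * b 2 - a 2 * b 1, a 2 * b 0 - a 0 * b 2, a 0 * b 1 - a 1 * b 0]

/-- The determinant of the 3×3 matrix with rows `a`, `b`, `c`. -/
def det3 (a b c : E3) : ℝ :=
  a 0 * (b 1 * c 2 - b 2 * c 1) - a 1 * (b 0 * c 2 - b 2 * c 0) +
    a 2 * (b 0 * c 1 - b 1 * c 0)

/-- Lemma (vertex relation): under the setup, with `a = ⟨z₄, v₁⟩`, `b = ⟨z₄, v₂⟩`,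
`c = ⟨z₄, v₃⟩` and `−3d = ⟨z₄, v₄⟩`, all of `a, b, c, d` are nonzero and
`(1/a)v₁ + (1/b)v₂ + (1/c)v₃ + (1/d)v₄ = 0`. -/
theorem vertex_relation
    (z v : Fin 4 → E3)
    (hz_inj : Function.Injective z)
    (hz_ne : ∀ i, z i ≠ 0)
    (hz_span : Submodule.span ℝ (Set.range z) = ⊤)
    (hz_sum : ∑ i : Fin 4, z i = 0)
    (T : Fin 4 → Set (Metric.sphere (0 : E3) 1))
    (hT : ∀ i, T i = {x | ⟪(x : E3), z i⟫ =
      Finset.univ.sup' Finset.univ_nonempty fun j : Fin 4 => ⟪(x : E3), z j⟫})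
    (hzT : ∀ i, z i = ∫ x in T i, (x : E3) ∂sphereArea)
    (hv_norm : ∀ ℓ, ‖v ℓ‖ = 1)
    (hv_eq : ∀ ℓ i j : Fin 4, i ≠ ℓ → j ≠ ℓ → ⟪z i, v ℓ⟫ = ⟪z j, v ℓ⟫)
    (hv_lt : ∀ ℓ i : Fin 4, i ≠ ℓ → ⟪z ℓ, v ℓ⟫ < ⟪z i, v ℓ⟫)
    (hv_uniq : ∀ (ℓ : Fin 4) (w : E3), ‖w‖ = 1 →
      (∀ i j : Fin 4, i ≠ ℓ → j ≠ ℓ → ⟪z i, w⟫ = ⟪z j, w⟫) →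
      (∀ i : Fin 4, i ≠ ℓ → ⟪z ℓ, w⟫ < ⟪z i, w⟫) → w = v ℓ)
    (θ : Fin 4 → Fin 4 → ℝ)
    (hθ : ∀ i j, θ i j = Real.arccos ⟪v i, v j⟫)
    (a b c d : ℝ)
    (ha : a = ⟪z 3, v 0⟫) (hb : b = ⟪z 3, v 1⟫) (hc : c = ⟪z 3, v 2⟫)
    (hd : -3 * d = ⟪z 3, v 3⟫) :
    a ≠ 0 ∧ b ≠ 0 ∧ c ≠ 0 ∧ d ≠ 0 ∧
      (1 / a) • v 0 + (1 / b) • v 1 + (1 / c) • v 2 + (1 / d) • v 3 = 0 := by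
  have hsum : ∀ ℓ : Fin 4, ∑ k : Fin 4, ⟪z k, v ℓ⟫ = 0 := by
    intro ℓ
    have h : ⟪∑ k : Fin 4, z k, v ℓ⟫ = 0 := by rw [hz_sum]; simp
    rw [sum_inner] at h
    exact h
  have key : ∀ ℓ j : Fin 4, j ≠ ℓ → ⟪z ℓ, v ℓ⟫ = -3 * ⟪z j, v ℓ⟫ := by
    intro ℓ j hj
    have h := hsum ℓ
    rw [← Finset.add_sum_erase _ _ (Finset.mem_univ ℓ)] at h
    have h2 : ∑ k ∈ Finset.univ.erase ℓ, ⟪z k, v ℓ⟫ = 3 * ⟪z j, v ℓ⟫ := by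
      rw [Finset.sum_congr rfl fun k hk =>
        hv_eq ℓ k j (Finset.ne_of_mem_erase hk) hj]
      rw [Finset.sum_const, Finset.card_erase_of_mem (Finset.mem_univ ℓ)]
      simp [mul_comm]
    linarith
  have hpos : ∀ ℓ j : Fin 4, j ≠ ℓ → 0 < ⟪z j, v ℓ⟫ := by
    intro ℓ j hj
    have h1 := hv_lt ℓ j hj
    have h2 := key ℓ j hj
    linarith
  have hapos : 0 < a := ha ▸ hpos 0 3 (by decide)
  have hbpos : 0 < b := hb ▸ hpos 1 3 (by decide)
  have hcpos : 0 < c := hc ▸ hpos 2 3 (by decide)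
  have hdval : d = ⟪z 0, v 3⟫ := by
    have h2 := key 3 0 (by decide)
    rw [← hd] at h2
    linarith
  have hdpos : 0 < d := hdval ▸ hpos 3 0 (by decide)
  refine ⟨ne_of_gt hapos, ne_of_gt hbpos, ne_of_gt hcpos, ne_of_gt hdpos, ?_⟩
  set w : E3 := (1 / a) • v 0 + (1 / b) • v 1 + (1 / c) • v 2 + (1 / d) • v 3 with hw
  have hzero : ∀ k : Fin 4, ⟪z k, w⟫ = 0 := by
    intro k
    have e0 : ∀ k : Fin 4, k ≠ 0 → ⟪z k, v 0⟫ = a := fun k hk =>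
      (hv_eq 0 k 3 hk (by decide)).trans ha.symm
    have e1 : ∀ k : Fin 4, k ≠ 1 → ⟪z k, v 1⟫ = b := fun k hk =>
      (hv_eq 1 k 3 hk (by decide)).trans hb.symm
    have e2 : ∀ k : Fin 4, k ≠ 2 → ⟪z k, v 2⟫ = c := fun k hk =>
      (hv_eq 2 k 3 hk (by decide)).trans hc.symm
    have e3 : ∀ k : Fin 4, k ≠ 3 → ⟪z k, v 3⟫ = d := fun k hk =>
      (hv_eq 3 k 0 hk (by decide)).trans hdval.symm
    have d0 : ⟪z 0, v 0⟫ = -3 * a := by rw [key 0 3 (by decide), ha]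
    have d1 : ⟪z 1, v 1⟫ = -3 * b := by rw [key 1 3 (by decide), hb]
    have d2 : ⟪z 2, v 2⟫ = -3 * c := by rw [key 2 3 (by decide), hc]
    have d3 : ⟪z 3, v 3⟫ = -3 * d := hd.symm
    have ha' := ne_of_gt hapos
    have hb' := ne_of_gt hbpos
    have hc' := ne_of_gt hcpos
    have hd' := ne_of_gt hdpos
    have comp : ∀ k : Fin 4, ⟪z k, w⟫ = 1 / a * ⟪z k, v 0⟫ + 1 / b * ⟪z k, v 1⟫ +
        1 / c * ⟪z k, v 2⟫ + 1 / d * ⟪z k, v 3⟫ := by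
      intro k
      rw [hw]
      simp only [inner_add_right, real_inner_smul_right]
    have h0 : ⟪z 0, w⟫ = 0 := by
      rw [comp 0, d0, e1 0 (by decide), e2 0 (by decide), e3 0 (by decide)]
      field_simp
      ring
    have h1 : ⟪z 1, w⟫ = 0 := by
      rw [comp 1, e0 1 (by decide), d1, e2 1 (by decide), e3 1 (by decide)]
      field_simp
      ring
    have h2 : ⟪z 2, w⟫ = 0 := by
      rw [comp 2, e0 2 (by decide), e1 2 (by decide), d2, e3 2 (by decide)]
      field_simp
      ring
    have h3 : ⟪z 3, w⟫ = 0 := by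
      rw [comp 3, e0 3 (by decide), e1 3 (by decide), e2 3 (by decide), d3]
      field_simp
      ring
    fin_cases k
    exacts [h0, h1, h2, h3]
  have hall : ∀ x : E3, ⟪x, w⟫ = 0 := by
    intro x
    have hx : x ∈ Submodule.span ℝ (Set.range z) := hz_span ▸ Submodule.mem_top
    induction hx using Submodule.span_induction with
    | mem y hy => obtain ⟨k, rfl⟩ := hy; exact hzero k
    | zero => simp
    | add y y' hy hy' ihy ihy' => rw [inner_add_left, ihy, ihy']; ring
    | smul r y hy ihy => rw [real_inner_smul_left, ihy]; ring
  exact inner_self_eq_zero.mp (hall w)
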